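/- arXiv:1904.08962 — 2 statements merged into one kernel-verified Lean document; each statement's English description precedes it below -/
import Mathlib

section
/- (Convexity in belief.) Let V_w be the unique bounded fixed point of the Bellman operator T_w of the constrained restless single-armed bandit with stochastic availability. Then for each y ∈ {0,1} and each feasible action a (a ∈ {0,1} if y = 1, a = 0 if y = 0), the functions π ↦ V_w(π, y) and π ↦ L^aV_w(π, y) are convex on [0,1]. -/
/-!
Value iteration `T_w^[n] 0` converges to `V_w` at rate `β ^ n`, since `T_w` is a `β`-contraction
in the sup norm on `[0,1] × {0,1}`, and a pointwise limit of convex functions is convex; so it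
suffices that `T_w` preserves convexity in the belief. The passive action values compose a convex
function with the affine map `γ`. In the active one, `ρ(π) V(Γ₁(π))` is the perspective
`D(π) g(N(π) / D(π))` of a convex `g`, with `D = ρ` and the numerator `N` of `Γ₁` both affine in
`π`, hence convex; likewise `(1 - ρ(π)) V(Γ₀(π))`. A maximum of convex functions is convex.
-/

open Set

noncomputable section

/-- Expected immediate reward (success probability) at belief `π`. -/
def rhoB (ρ0 ρ1 π : ℝ) : ℝ := π * ρ0 + (1 - π) * ρ1

/-- Belief update after a play resulting in success. -/
def Gam1 (p00 p10 ρ0 ρ1 π : ℝ) : ℝ :=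
  (π * ρ0 * p00 + (1 - π) * ρ1 * p10) / (π * ρ0 + (1 - π) * ρ1)

/-- Belief update after a play resulting in failure. -/
def Gam0 (p00 p10 ρ0 ρ1 π : ℝ) : ℝ :=
  (π * (1 - ρ0) * p00 + (1 - π) * (1 - ρ1) * p10) /
    (π * (1 - ρ0) + (1 - π) * (1 - ρ1))

/-- Belief update without observation (natural Markov evolution). -/
def gam (p00 p10 π : ℝ) : ℝ := π * p00 + (1 - π) * p10

/-- Action value of playing an available arm. -/
def Lact1 (p00 p10 ρ0 ρ1 β θ11 : ℝ) (V : ℝ → Bool → ℝ) (π : ℝ) : ℝ :=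
  rhoB ρ0 ρ1 π
    + β * rhoB ρ0 ρ1 π *
        (θ11 * V (Gam1 p00 p10 ρ0 ρ1 π) true +
          (1 - θ11) * V (Gam1 p00 p10 ρ0 ρ1 π) false)
    + β * (1 - rhoB ρ0 ρ1 π) *
        (θ11 * V (Gam0 p00 p10 ρ0 ρ1 π) true +
          (1 - θ11) * V (Gam0 p00 p10 ρ0 ρ1 π) false)

/-- Action value of not playing an available arm (subsidy `w`). -/
def Lact0a (p00 p10 β w θ01 : ℝ) (V : ℝ → Bool → ℝ) (π : ℝ) : ℝ :=
  w + β * (θ01 * V (gam p00 p10 π) true + (1 - θ01) * V (gam p00 p10 π) false)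

/-- Action value for an unavailable arm (subsidy `w`). -/
def Lact0u (p00 p10 β w θ00 : ℝ) (V : ℝ → Bool → ℝ) (π : ℝ) : ℝ :=
  w + β * (θ00 * V (gam p00 p10 π) true + (1 - θ00) * V (gam p00 p10 π) false)

/-- Bellman operator of the constrained restless single-armed bandit with
stochastic availability; availability `y` is encoded by `Bool`. -/
def TwOp (p00 p10 ρ0 ρ1 β w θ11 θ01 θ00 : ℝ) (V : ℝ → Bool → ℝ) : ℝ → Bool → ℝ :=
  fun π y =>
    if y then max (Lact1 p00 p10 ρ0 ρ1 β θ11 V π) (Lact0a p00 p10 β w θ01 V π)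
    else Lact0u p00 p10 β w θ00 V π

/-- Bounded on the belief space `[0,1] × {0,1}`. -/
def BddOnIcc (V : ℝ → Bool → ℝ) : Prop :=
  ∃ C : ℝ, ∀ π ∈ Icc (0:ℝ) 1, ∀ y : Bool, |V π y| ≤ C

/-- Fixed point of an operator on the belief space `[0,1] × {0,1}`. -/
def FixedOnIcc (T : (ℝ → Bool → ℝ) → ℝ → Bool → ℝ) (V : ℝ → Bool → ℝ) : Prop :=
  ∀ π ∈ Icc (0:ℝ) 1, ∀ y : Bool, T V π y = V π y

open Filter Topology

theorem ConvexOn.perspective {E F : Type*} [AddCommGroup E] [Module ℝ E] [AddCommGroup F]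
    [Module ℝ F] {s : Set E} {t : Set F} {g : F → ℝ} (hg : ConvexOn ℝ t g) (hs : Convex ℝ s)
    (D : E →ᵃ[ℝ] ℝ) (N : E →ᵃ[ℝ] F) (hD : ∀ x ∈ s, 0 < D x)
    (hN : ∀ x ∈ s, (D x)⁻¹ • N x ∈ t) :
    ConvexOn ℝ s fun x => D x * g ((D x)⁻¹ • N x) := by
  refine ⟨hs, fun x hx z hz a b ha hb hab => ?_⟩
  set p := a • x + b • z
  have hDx := hD x hx
  have hDz := hD z hz
  have hDp : D p = a * D x + b * D z := Convex.combo_affine_apply hab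
  have hDp_pos : 0 < D p := hD p (hs hx hz ha hb hab)
  have hweights : a * D x / D p + b * D z / D p = 1 := by
    rw [← add_div, ← hDp, div_self hDp_pos.ne']
  have hratio : (D p)⁻¹ • N p
      = (a * D x / D p) • ((D x)⁻¹ • N x) + (b * D z / D p) • ((D z)⁻¹ • N z) := by
    have hNp : N p = a • N x + b • N z := Convex.combo_affine_apply hab
    rw [hNp, smul_add, smul_smul, smul_smul, smul_smul, smul_smul]
    congr 2 <;> field_simp
  calc D p * g ((D p)⁻¹ • N p)
      ≤ D p * ((a * D x / D p) * g ((D x)⁻¹ • N x) + (b * D z / D p) * g ((D z)⁻¹ • N z)) := by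
        rw [hratio]
        exact mul_le_mul_of_nonneg_left (hg.2 (hN x hx) (hN z hz) (by positivity)
          (by positivity) hweights) hDp_pos.le
    _ = a • (D x * g ((D x)⁻¹ • N x)) + b • (D z * g ((D z)⁻¹ • N z)) := by
        simp only [smul_eq_mul]
        field_simp

theorem ConvexOn.of_tendsto {E : Type*} [AddCommGroup E] [Module ℝ E] {s : Set E}
    {f : ℕ → E → ℝ} {g : E → ℝ} (hf : ∀ n, ConvexOn ℝ s (f n))
    (hlim : ∀ x ∈ s, Tendsto (fun n => f n x) atTop (𝓝 (g x))) (hs : Convex ℝ s) :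
    ConvexOn ℝ s g := by
  refine ⟨hs, fun x hx z hz a b ha hb hab => ?_⟩
  refine le_of_tendsto_of_tendsto' (hlim _ (hs hx hz ha hb hab))
    (((hlim x hx).const_smul a).add ((hlim z hz).const_smul b)) fun n => ?_
  exact (hf n).2 hx hz ha hb hab

theorem Convex.mul_add_mul_div_add_mem {s : Set ℝ} (hs : Convex ℝ s) {x y a b : ℝ} (hx : x ∈ s)
    (hy : y ∈ s) (ha : 0 ≤ a) (hb : 0 ≤ b) (hab : 0 < a + b) : (a * x + b * y) / (a + b) ∈ s := by
  convert convex_iff_div.1 hs hx hy ha hb hab using 1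
  simp only [smul_eq_mul]
  field_simp

theorem abs_convex_combo_le {θ a b Δ : ℝ} (hθ : θ ∈ Icc (0:ℝ) 1) (ha : |a| ≤ Δ) (hb : |b| ≤ Δ) :
    |θ * a + (1 - θ) * b| ≤ Δ := by
  have := convex_Icc (-Δ) Δ (abs_le.1 ha) (abs_le.1 hb) hθ.1 (sub_nonneg.2 hθ.2) (by ring)
  exact abs_le.2 this

variable {p00 p10 ρ0 ρ1 β w θ θ11 θ01 θ00 π : ℝ}

def contValue (θ : ℝ) (U : ℝ → Bool → ℝ) (q : ℝ) : ℝ := θ * U q true + (1 - θ) * U q false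

theorem convexOn_contValue {s : Set ℝ} {U : ℝ → Bool → ℝ} (hθ : θ ∈ Icc (0:ℝ) 1)
    (hU : ∀ y, ConvexOn ℝ s fun q => U q y) : ConvexOn ℝ s (contValue θ U) :=
  ((hU true).smul hθ.1).add ((hU false).smul (sub_nonneg.2 hθ.2))

theorem abs_contValue_sub_le {U W : ℝ → Bool → ℝ} {q Δ : ℝ} (hθ : θ ∈ Icc (0:ℝ) 1)
    (h : ∀ y, |U q y - W q y| ≤ Δ) : |contValue θ U q - contValue θ W q| ≤ Δ := by
  convert abs_convex_combo_le hθ (h true) (h false) using 2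
  simp only [contValue]
  ring

theorem gam_eq_lineMap : gam p00 p10 π = AffineMap.lineMap p10 p00 π := by
  rw [AffineMap.lineMap_apply_ring, gam]
  ring

theorem rhoB_eq_lineMap : rhoB ρ0 ρ1 π = AffineMap.lineMap ρ1 ρ0 π := by
  rw [AffineMap.lineMap_apply_ring, rhoB]
  ring

theorem one_sub_rhoB_eq_lineMap : 1 - rhoB ρ0 ρ1 π = AffineMap.lineMap (1 - ρ1) (1 - ρ0) π := by
  rw [AffineMap.lineMap_apply_ring, rhoB]
  ring

theorem Gam1_eq_lineMap : Gam1 p00 p10 ρ0 ρ1 π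
    = (AffineMap.lineMap ρ1 ρ0 π)⁻¹ • AffineMap.lineMap (ρ1 * p10) (ρ0 * p00) π := by
  rw [AffineMap.lineMap_apply_ring, AffineMap.lineMap_apply_ring, Gam1, smul_eq_mul,
    inv_mul_eq_div]
  ring_nf

theorem Gam0_eq_lineMap : Gam0 p00 p10 ρ0 ρ1 π
    = (AffineMap.lineMap (1 - ρ1) (1 - ρ0) π)⁻¹ •
        AffineMap.lineMap ((1 - ρ1) * p10) ((1 - ρ0) * p00) π := by
  rw [AffineMap.lineMap_apply_ring, AffineMap.lineMap_apply_ring, Gam0, smul_eq_mul,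
    inv_mul_eq_div]
  ring_nf

theorem gam_mem_Icc (hp00 : p00 ∈ Icc (0:ℝ) 1) (hp10 : p10 ∈ Icc (0:ℝ) 1)
    (hπ : π ∈ Icc (0:ℝ) 1) : gam p00 p10 π ∈ Icc (0:ℝ) 1 := by
  rw [gam_eq_lineMap]
  exact (convex_Icc 0 1).lineMap_mem hp10 hp00 hπ

theorem rhoB_pos (hρ0 : 0 < ρ0) (hρ1 : 0 < ρ1) (hπ : π ∈ Icc (0:ℝ) 1) : 0 < rhoB ρ0 ρ1 π := by
  rw [rhoB_eq_lineMap]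
  exact (convex_Ioi (0:ℝ)).lineMap_mem hρ1 hρ0 hπ

theorem rhoB_lt_one (hρ0 : ρ0 < 1) (hρ1 : ρ1 < 1) (hπ : π ∈ Icc (0:ℝ) 1) : rhoB ρ0 ρ1 π < 1 := by
  rw [rhoB_eq_lineMap]
  exact (convex_Iio (1:ℝ)).lineMap_mem hρ1 hρ0 hπ

theorem Gam1_mem_Icc (hp00 : p00 ∈ Icc (0:ℝ) 1) (hp10 : p10 ∈ Icc (0:ℝ) 1) (hρ0 : 0 < ρ0)
    (hρ1 : 0 < ρ1) (hπ : π ∈ Icc (0:ℝ) 1) : Gam1 p00 p10 ρ0 ρ1 π ∈ Icc (0:ℝ) 1 :=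
  (convex_Icc 0 1).mul_add_mul_div_add_mem hp00 hp10 (mul_nonneg hπ.1 hρ0.le)
    (mul_nonneg (sub_nonneg.2 hπ.2) hρ1.le) (rhoB_pos hρ0 hρ1 hπ)

theorem Gam0_mem_Icc (hp00 : p00 ∈ Icc (0:ℝ) 1) (hp10 : p10 ∈ Icc (0:ℝ) 1) (hρ0 : ρ0 < 1)
    (hρ1 : ρ1 < 1) (hπ : π ∈ Icc (0:ℝ) 1) : Gam0 p00 p10 ρ0 ρ1 π ∈ Icc (0:ℝ) 1 := by
  refine (convex_Icc 0 1).mul_add_mul_div_add_mem hp00 hp10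
    (mul_nonneg hπ.1 (sub_nonneg.2 hρ0.le)) (mul_nonneg (sub_nonneg.2 hπ.2) (sub_nonneg.2 hρ1.le)) ?_
  convert sub_pos.2 (rhoB_lt_one hρ0 hρ1 hπ) using 1
  simp only [rhoB]
  ring

theorem convexOn_Lact0u {U : ℝ → Bool → ℝ} (hp00 : p00 ∈ Icc (0:ℝ) 1)
    (hp10 : p10 ∈ Icc (0:ℝ) 1) (hβ : 0 ≤ β) (hθ : θ ∈ Icc (0:ℝ) 1)
    (hU : ∀ y, ConvexOn ℝ (Icc (0:ℝ) 1) fun q => U q y) :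
    ConvexOn ℝ (Icc (0:ℝ) 1) (Lact0u p00 p10 β w θ U) := by
  have hcomp := ((convexOn_contValue hθ hU).comp_affineMap (AffineMap.lineMap p10 p00)).subset
    (fun π hπ => (convex_Icc 0 1).lineMap_mem hp10 hp00 hπ) (convex_Icc 0 1)
  refine ((hcomp.smul hβ).add_const w).congr fun π _ => ?_
  simp only [Pi.add_apply, Function.comp_apply, smul_eq_mul, ← gam_eq_lineMap, Lact0u, contValue]
  ring

theorem convexOn_Lact1 {U : ℝ → Bool → ℝ} (hp00 : p00 ∈ Icc (0:ℝ) 1)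
    (hp10 : p10 ∈ Icc (0:ℝ) 1) (hρ0 : ρ0 ∈ Ioo (0:ℝ) 1) (hρ1 : ρ1 ∈ Ioo (0:ℝ) 1) (hβ : 0 ≤ β)
    (hθ : θ ∈ Icc (0:ℝ) 1) (hU : ∀ y, ConvexOn ℝ (Icc (0:ℝ) 1) fun q => U q y) :
    ConvexOn ℝ (Icc (0:ℝ) 1) (Lact1 p00 p10 ρ0 ρ1 β θ U) := by
  have hc := convexOn_contValue hθ hU
  have hsuccess := hc.perspective (convex_Icc 0 1) (AffineMap.lineMap ρ1 ρ0)
    (AffineMap.lineMap (ρ1 * p10) (ρ0 * p00))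
    (fun π hπ => rhoB_eq_lineMap (π := π) ▸ rhoB_pos hρ0.1 hρ1.1 hπ)
    (fun π hπ => Gam1_eq_lineMap ▸ Gam1_mem_Icc hp00 hp10 hρ0.1 hρ1.1 hπ)
  have hfailure := hc.perspective (convex_Icc 0 1) (AffineMap.lineMap (1 - ρ1) (1 - ρ0))
    (AffineMap.lineMap ((1 - ρ1) * p10) ((1 - ρ0) * p00))
    (fun π hπ => one_sub_rhoB_eq_lineMap (π := π) ▸ sub_pos.2 (rhoB_lt_one hρ0.2 hρ1.2 hπ))
    (fun π hπ => Gam0_eq_lineMap ▸ Gam0_mem_Icc hp00 hp10 hρ0.2 hρ1.2 hπ)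
  have hreward : ConvexOn ℝ (Icc (0:ℝ) 1) (AffineMap.lineMap ρ1 ρ0) :=
    ((convexOn_id convex_univ).comp_affineMap _).subset (fun _ _ => trivial) (convex_Icc 0 1)
  refine ((hreward.add (hsuccess.smul hβ)).add (hfailure.smul hβ)).congr fun π _ => ?_
  rw [Pi.add_apply, Pi.add_apply, ← Gam1_eq_lineMap, ← Gam0_eq_lineMap,
    ← one_sub_rhoB_eq_lineMap, ← rhoB_eq_lineMap]
  simp only [smul_eq_mul, Lact1, contValue]
  ring

theorem convexOn_TwOp {U : ℝ → Bool → ℝ} (hp00 : p00 ∈ Icc (0:ℝ) 1)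
    (hp10 : p10 ∈ Icc (0:ℝ) 1) (hρ0 : ρ0 ∈ Ioo (0:ℝ) 1) (hρ1 : ρ1 ∈ Ioo (0:ℝ) 1) (hβ : 0 ≤ β)
    (hθ11 : θ11 ∈ Icc (0:ℝ) 1) (hθ01 : θ01 ∈ Icc (0:ℝ) 1) (hθ00 : θ00 ∈ Icc (0:ℝ) 1)
    (hU : ∀ y, ConvexOn ℝ (Icc (0:ℝ) 1) fun q => U q y) (y : Bool) :
    ConvexOn ℝ (Icc (0:ℝ) 1) fun π => TwOp p00 p10 ρ0 ρ1 β w θ11 θ01 θ00 U π y := by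
  -- `Lact0a` and `Lact0u` have the same body, so `convexOn_Lact0u` serves for both.
  cases y
  · exact convexOn_Lact0u hp00 hp10 hβ hθ00 hU
  · exact (convexOn_Lact1 hp00 hp10 hρ0 hρ1 hβ hθ11 hU).sup
      (convexOn_Lact0u hp00 hp10 hβ hθ01 hU)

section Contraction

variable {U W : ℝ → Bool → ℝ} {Δ : ℝ}

theorem abs_Lact0u_sub_le (hp00 : p00 ∈ Icc (0:ℝ) 1) (hp10 : p10 ∈ Icc (0:ℝ) 1) (hβ : 0 ≤ β)
    (hθ : θ ∈ Icc (0:ℝ) 1) (h : ∀ q ∈ Icc (0:ℝ) 1, ∀ y, |U q y - W q y| ≤ Δ)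
    (hπ : π ∈ Icc (0:ℝ) 1) :
    |Lact0u p00 p10 β w θ U π - Lact0u p00 p10 β w θ W π| ≤ β * Δ := by
  calc |Lact0u p00 p10 β w θ U π - Lact0u p00 p10 β w θ W π|
      = |β * (contValue θ U (gam p00 p10 π) - contValue θ W (gam p00 p10 π))| := by
        simp only [Lact0u, contValue]
        ring_nf
    _ = β * |contValue θ U (gam p00 p10 π) - contValue θ W (gam p00 p10 π)| := by
        rw [abs_mul, abs_of_nonneg hβ]
    _ ≤ β * Δ := mul_le_mul_of_nonneg_left
        (abs_contValue_sub_le hθ (h _ (gam_mem_Icc hp00 hp10 hπ))) hβ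

theorem abs_Lact1_sub_le (hp00 : p00 ∈ Icc (0:ℝ) 1) (hp10 : p10 ∈ Icc (0:ℝ) 1)
    (hρ0 : ρ0 ∈ Ioo (0:ℝ) 1) (hρ1 : ρ1 ∈ Ioo (0:ℝ) 1) (hβ : 0 ≤ β)
    (hθ : θ ∈ Icc (0:ℝ) 1) (h : ∀ q ∈ Icc (0:ℝ) 1, ∀ y, |U q y - W q y| ≤ Δ)
    (hπ : π ∈ Icc (0:ℝ) 1) :
    |Lact1 p00 p10 ρ0 ρ1 β θ U π - Lact1 p00 p10 ρ0 ρ1 β θ W π| ≤ β * Δ := by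
  set G1 := Gam1 p00 p10 ρ0 ρ1 π with hG1
  set G0 := Gam0 p00 p10 ρ0 ρ1 π with hG0
  have hsuccess := abs_contValue_sub_le hθ (h G1 (Gam1_mem_Icc hp00 hp10 hρ0.1 hρ1.1 hπ))
  have hfailure := abs_contValue_sub_le hθ (h G0 (Gam0_mem_Icc hp00 hp10 hρ0.2 hρ1.2 hπ))
  have hρ : rhoB ρ0 ρ1 π ∈ Icc (0:ℝ) 1 :=
    ⟨(rhoB_pos hρ0.1 hρ1.1 hπ).le, (rhoB_lt_one hρ0.2 hρ1.2 hπ).le⟩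
  calc |Lact1 p00 p10 ρ0 ρ1 β θ U π - Lact1 p00 p10 ρ0 ρ1 β θ W π|
      = |β * (rhoB ρ0 ρ1 π * (contValue θ U G1 - contValue θ W G1)
          + (1 - rhoB ρ0 ρ1 π) * (contValue θ U G0 - contValue θ W G0))| := by
        simp only [Lact1, contValue, ← hG1, ← hG0]
        ring_nf
    _ = β * |rhoB ρ0 ρ1 π * (contValue θ U G1 - contValue θ W G1)
          + (1 - rhoB ρ0 ρ1 π) * (contValue θ U G0 - contValue θ W G0)| := by
        rw [abs_mul, abs_of_nonneg hβ]
    _ ≤ β * Δ := mul_le_mul_of_nonneg_left (abs_convex_combo_le hρ hsuccess hfailure) hβ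

theorem abs_TwOp_sub_le (hp00 : p00 ∈ Icc (0:ℝ) 1) (hp10 : p10 ∈ Icc (0:ℝ) 1)
    (hρ0 : ρ0 ∈ Ioo (0:ℝ) 1) (hρ1 : ρ1 ∈ Ioo (0:ℝ) 1) (hβ : 0 ≤ β)
    (hθ11 : θ11 ∈ Icc (0:ℝ) 1) (hθ01 : θ01 ∈ Icc (0:ℝ) 1) (hθ00 : θ00 ∈ Icc (0:ℝ) 1)
    (h : ∀ q ∈ Icc (0:ℝ) 1, ∀ y, |U q y - W q y| ≤ Δ) (hπ : π ∈ Icc (0:ℝ) 1) (y : Bool) :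
    |TwOp p00 p10 ρ0 ρ1 β w θ11 θ01 θ00 U π y - TwOp p00 p10 ρ0 ρ1 β w θ11 θ01 θ00 W π y|
      ≤ β * Δ := by
  cases y
  · exact abs_Lact0u_sub_le hp00 hp10 hβ hθ00 h hπ
  · exact (abs_max_sub_max_le_max _ _ _ _).trans
      (max_le (abs_Lact1_sub_le hp00 hp10 hρ0 hρ1 hβ hθ11 h hπ)
        (abs_Lact0u_sub_le hp00 hp10 hβ hθ01 h hπ))

end Contraction

section ValueIteration

variable {V : ℝ → Bool → ℝ} {C : ℝ}

theorem abs_iterate_TwOp_sub_le (hp00 : p00 ∈ Icc (0:ℝ) 1) (hp10 : p10 ∈ Icc (0:ℝ) 1)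
    (hρ0 : ρ0 ∈ Ioo (0:ℝ) 1) (hρ1 : ρ1 ∈ Ioo (0:ℝ) 1) (hβ : 0 ≤ β)
    (hθ11 : θ11 ∈ Icc (0:ℝ) 1) (hθ01 : θ01 ∈ Icc (0:ℝ) 1) (hθ00 : θ00 ∈ Icc (0:ℝ) 1)
    (hC : ∀ π ∈ Icc (0:ℝ) 1, ∀ y, |V π y| ≤ C)
    (hVfix : FixedOnIcc (TwOp p00 p10 ρ0 ρ1 β w θ11 θ01 θ00) V) (n : ℕ) :
    ∀ π ∈ Icc (0:ℝ) 1, ∀ y,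
      |(TwOp p00 p10 ρ0 ρ1 β w θ11 θ01 θ00)^[n] 0 π y - V π y| ≤ β ^ n * C := by
  induction n with
  | zero => simpa using hC
  | succ n ih =>
    intro π hπ y
    rw [Function.iterate_succ_apply', ← hVfix π hπ y, pow_succ', mul_assoc]
    exact abs_TwOp_sub_le hp00 hp10 hρ0 hρ1 hβ hθ11 hθ01 hθ00 ih hπ y

theorem convexOn_iterate_TwOp (hp00 : p00 ∈ Icc (0:ℝ) 1) (hp10 : p10 ∈ Icc (0:ℝ) 1)
    (hρ0 : ρ0 ∈ Ioo (0:ℝ) 1) (hρ1 : ρ1 ∈ Ioo (0:ℝ) 1) (hβ : 0 ≤ β)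
    (hθ11 : θ11 ∈ Icc (0:ℝ) 1) (hθ01 : θ01 ∈ Icc (0:ℝ) 1) (hθ00 : θ00 ∈ Icc (0:ℝ) 1)
    (n : ℕ) (y : Bool) :
    ConvexOn ℝ (Icc (0:ℝ) 1) fun π => (TwOp p00 p10 ρ0 ρ1 β w θ11 θ01 θ00)^[n] 0 π y := by
  induction n generalizing y with
  | zero => exact convexOn_const 0 (convex_Icc 0 1)
  | succ n ih =>
    simp only [Function.iterate_succ_apply']
    exact convexOn_TwOp hp00 hp10 hρ0 hρ1 hβ hθ11 hθ01 hθ00 ih y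

theorem convexOn_of_fixedOnIcc_TwOp (hp00 : p00 ∈ Icc (0:ℝ) 1) (hp10 : p10 ∈ Icc (0:ℝ) 1)
    (hρ0 : ρ0 ∈ Ioo (0:ℝ) 1) (hρ1 : ρ1 ∈ Ioo (0:ℝ) 1) (hβ : β ∈ Ioo (0:ℝ) 1)
    (hθ11 : θ11 ∈ Icc (0:ℝ) 1) (hθ01 : θ01 ∈ Icc (0:ℝ) 1) (hθ00 : θ00 ∈ Icc (0:ℝ) 1)
    (hVb : BddOnIcc V) (hVfix : FixedOnIcc (TwOp p00 p10 ρ0 ρ1 β w θ11 θ01 θ00) V) (y : Bool) :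
    ConvexOn ℝ (Icc (0:ℝ) 1) fun π => V π y := by
  obtain ⟨C, hC⟩ := hVb
  have hgeom : Tendsto (fun n => β ^ n * C) atTop (𝓝 0) := by
    simpa using (tendsto_pow_atTop_nhds_zero_of_lt_one hβ.1.le hβ.2).mul_const C
  refine ConvexOn.of_tendsto
    (fun n => convexOn_iterate_TwOp (w := w) hp00 hp10 hρ0 hρ1 hβ.1.le hθ11 hθ01 hθ00 n y)
    (fun π hπ => tendsto_iff_dist_tendsto_zero.2 (squeeze_zero (fun _ => dist_nonneg)
      (fun n => ?_) hgeom)) (convex_Icc 0 1)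
  exact abs_iterate_TwOp_sub_le hp00 hp10 hρ0 hρ1 hβ.1.le hθ11 hθ01 hθ00 hC hVfix n π hπ y

end ValueIteration

/-- **Convexity in belief.** The value function `V_w` (the
unique bounded fixed point of `T_w`) and each feasible action-value function
are convex in the belief `π` on `[0,1]`, for each availability `y`. -/
theorem stmt5 (p00 p10 ρ0 ρ1 β w θ11 θ01 θ00 : ℝ)
    (hp00 : p00 ∈ Icc (0:ℝ) 1) (hp10 : p10 ∈ Icc (0:ℝ) 1)
    (hρ0 : 0 < ρ0) (hρ01 : ρ0 < ρ1) (hρ1 : ρ1 < 1)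
    (hβ : β ∈ Ioo (0:ℝ) 1)
    (hθ11 : θ11 ∈ Icc (0:ℝ) 1) (hθ01 : θ01 ∈ Icc (0:ℝ) 1) (hθ00 : θ00 ∈ Icc (0:ℝ) 1)
    (V : ℝ → Bool → ℝ) (hVb : BddOnIcc V)
    (hVfix : FixedOnIcc (TwOp p00 p10 ρ0 ρ1 β w θ11 θ01 θ00) V) :
    (∀ y : Bool, ConvexOn ℝ (Icc (0:ℝ) 1) (fun π => V π y))
    ∧ ConvexOn ℝ (Icc (0:ℝ) 1) (fun π => Lact1 p00 p10 ρ0 ρ1 β θ11 V π)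
    ∧ ConvexOn ℝ (Icc (0:ℝ) 1) (fun π => Lact0a p00 p10 β w θ01 V π)
    ∧ ConvexOn ℝ (Icc (0:ℝ) 1) (fun π => Lact0u p00 p10 β w θ00 V π) := by
  have hρ0' : ρ0 ∈ Ioo (0:ℝ) 1 := ⟨hρ0, hρ01.trans hρ1⟩
  have hρ1' : ρ1 ∈ Ioo (0:ℝ) 1 := ⟨hρ0.trans hρ01, hρ1⟩
  have hV := convexOn_of_fixedOnIcc_TwOp hp00 hp10 hρ0' hρ1' hβ hθ11 hθ01 hθ00 hVb hVfix
  exact ⟨hV, convexOn_Lact1 hp00 hp10 hρ0' hρ1' hβ.1.le hθ11 hV,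
    convexOn_Lact0u hp00 hp10 hβ.1.le hθ01 hV, convexOn_Lact0u hp00 hp10 hβ.1.le hθ00 hV⟩
end
end

section
/- (At most one root of the advantage function.) Assume ρ1 > ρ0 and either 0 < p00 − p10 < 1/5 or 0 < p10 − p00 < 1/3. Then the advantage function D(π) := L1V_w(π,1) − L0V_w(π,1) has at most one root in (0,1): if π, π' ∈ (0,1) satisfy D(π) = D(π') = 0, then π = π'. -/
open Set

noncomputable section

open Filter Topology

/-! The value function is Lipschitz in the belief with constant
`(ρ1 - ρ0) / (1 - β |p00 - p10|)`. Indeed, one Bellman step turns "`K`-Lipschitz up to an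
additive slack `E`" into constant `ρ1 - ρ0 + β |p00 - p10| K + β (ρ1 - ρ0) E` with slack `β E`,
and iterating from the trivial bound `2 sup |V|` drives the slack to `0`. Playing splits the
belief into `Γ1` and `Γ0`, but these increments telescope back to `γ π - γ π'`, so the
continuation values of both actions move by at most `β |p00 - p10| K |π - π'|`, while the
immediate reward `ρ(π)` falls at rate `ρ1 - ρ0`. The advantage is therefore strictly decreasing
once `3 β |p00 - p10| < 1`, and has at most one root. -/

namespace AvailabilityBandit

variable {p00 p10 ρ0 ρ1 β w θ π π' K E : ℝ} {V : ℝ → Bool → ℝ}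

lemma weighted_avg_mem_Icc {a b x y : ℝ} (ha : 0 ≤ a) (hb : 0 ≤ b) (hab : 0 < a + b)
    (hx : x ∈ Icc (0:ℝ) 1) (hy : y ∈ Icc (0:ℝ) 1) : (a * x + b * y) / (a + b) ∈ Icc (0:ℝ) 1 := by
  obtain ⟨hx0, hx1⟩ := hx
  obtain ⟨hy0, hy1⟩ := hy
  rw [mem_Icc, le_div_iff₀ hab, div_le_iff₀ hab]
  constructor <;> nlinarith

lemma rhoB_mem_Icc (hρ01 : ρ0 ≤ ρ1) (hπ : π ∈ Icc (0:ℝ) 1) : rhoB ρ0 ρ1 π ∈ Icc ρ0 ρ1 := by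
  obtain ⟨h0, h1⟩ := hπ
  unfold rhoB
  constructor <;> nlinarith

lemma rhoB_sub (ρ0 ρ1 π π' : ℝ) : rhoB ρ0 ρ1 π - rhoB ρ0 ρ1 π' = (ρ1 - ρ0) * (π' - π) := by
  unfold rhoB; ring

lemma gam_sub (p00 p10 π π' : ℝ) : gam p00 p10 π - gam p00 p10 π' = (p00 - p10) * (π - π') := by
  unfold gam; ring

lemma gam_mem_Icc (hp00 : p00 ∈ Icc (0:ℝ) 1) (hp10 : p10 ∈ Icc (0:ℝ) 1) (hπ : π ∈ Icc (0:ℝ) 1) :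
    gam p00 p10 π ∈ Icc (0:ℝ) 1 := by
  simpa [gam] using
    weighted_avg_mem_Icc hπ.1 (sub_nonneg.2 hπ.2) (by norm_num) hp00 hp10

lemma Gam1_mem_Icc (hp00 : p00 ∈ Icc (0:ℝ) 1) (hp10 : p10 ∈ Icc (0:ℝ) 1) (hρ0 : 0 < ρ0)
    (hρ01 : ρ0 ≤ ρ1) (hπ : π ∈ Icc (0:ℝ) 1) : Gam1 p00 p10 ρ0 ρ1 π ∈ Icc (0:ℝ) 1 :=
  weighted_avg_mem_Icc (mul_nonneg hπ.1 hρ0.le)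
    (mul_nonneg (sub_nonneg.2 hπ.2) (hρ0.le.trans hρ01))
    (hρ0.trans_le (rhoB_mem_Icc hρ01 hπ).1) hp00 hp10

lemma Gam0_mem_Icc (hp00 : p00 ∈ Icc (0:ℝ) 1) (hp10 : p10 ∈ Icc (0:ℝ) 1)
    (hρ01 : ρ0 ≤ ρ1) (hρ1 : ρ1 < 1) (hπ : π ∈ Icc (0:ℝ) 1) :
    Gam0 p00 p10 ρ0 ρ1 π ∈ Icc (0:ℝ) 1 := by
  have hpos : 0 < π * (1 - ρ0) + (1 - π) * (1 - ρ1) := by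
    have := (rhoB_mem_Icc hρ01 hπ).2
    unfold rhoB at this
    linarith
  exact weighted_avg_mem_Icc (mul_nonneg hπ.1 (by linarith))
    (mul_nonneg (sub_nonneg.2 hπ.2) (by linarith)) hpos hp00 hp10

lemma rhoB_mem_Ioo (hρ0 : 0 < ρ0) (hρ01 : ρ0 ≤ ρ1) (hρ1 : ρ1 < 1) (hπ : π ∈ Icc (0:ℝ) 1) :
    rhoB ρ0 ρ1 π ∈ Ioo (0:ℝ) 1 :=
  ⟨hρ0.trans_le (rhoB_mem_Icc hρ01 hπ).1, (rhoB_mem_Icc hρ01 hπ).2.trans_lt hρ1⟩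

lemma rhoB_mul_Gam1_sub (hA : rhoB ρ0 ρ1 π ≠ 0) (hB : rhoB ρ0 ρ1 π' ≠ 0) :
    rhoB ρ0 ρ1 π * (Gam1 p00 p10 ρ0 ρ1 π - Gam1 p00 p10 ρ0 ρ1 π')
      = ρ0 * ρ1 / rhoB ρ0 ρ1 π' * ((p00 - p10) * (π - π')) := by
  unfold Gam1 rhoB at *
  rw [div_sub_div _ _ hA hB, mul_div_assoc', div_mul_eq_mul_div,
    div_eq_div_iff (mul_ne_zero hA hB) hB]
  ring

lemma Gam0_eq (p00 p10 ρ0 ρ1 π : ℝ) :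
    Gam0 p00 p10 ρ0 ρ1 π
      = (π * (1 - ρ0) * p00 + (1 - π) * (1 - ρ1) * p10) / (1 - rhoB ρ0 ρ1 π) := by
  unfold Gam0 rhoB; ring_nf

lemma one_sub_rhoB_mul_Gam0_sub (hA : 1 - rhoB ρ0 ρ1 π ≠ 0) (hB : 1 - rhoB ρ0 ρ1 π' ≠ 0) :
    (1 - rhoB ρ0 ρ1 π) * (Gam0 p00 p10 ρ0 ρ1 π - Gam0 p00 p10 ρ0 ρ1 π')
      = (1 - ρ0) * (1 - ρ1) / (1 - rhoB ρ0 ρ1 π') * ((p00 - p10) * (π - π')) := by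
  rw [Gam0_eq, Gam0_eq]
  unfold rhoB at *
  rw [div_sub_div _ _ hA hB, mul_div_assoc', div_mul_eq_mul_div,
    div_eq_div_iff (mul_ne_zero hA hB) hB]
  ring

lemma rhoB_sub_mul_Gam1_sub_Gam0 (hB : rhoB ρ0 ρ1 π' ≠ 0) (hB' : 1 - rhoB ρ0 ρ1 π' ≠ 0) :
    (rhoB ρ0 ρ1 π - rhoB ρ0 ρ1 π') * (Gam1 p00 p10 ρ0 ρ1 π' - Gam0 p00 p10 ρ0 ρ1 π')
      = (ρ1 - ρ0) ^ 2 * (π' * (1 - π')) / (rhoB ρ0 ρ1 π' * (1 - rhoB ρ0 ρ1 π'))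
        * ((p00 - p10) * (π - π')) := by
  rw [Gam0_eq]
  unfold Gam1 rhoB at *
  rw [div_sub_div _ _ hB hB', mul_div_assoc', div_mul_eq_mul_div,
    div_eq_div_iff (mul_ne_zero hB hB') (mul_ne_zero hB hB')]
  ring

lemma belief_weights_sum (hB : rhoB ρ0 ρ1 π' ≠ 0) (hB' : 1 - rhoB ρ0 ρ1 π' ≠ 0) :
    ρ0 * ρ1 / rhoB ρ0 ρ1 π' + (1 - ρ0) * (1 - ρ1) / (1 - rhoB ρ0 ρ1 π')
      + (ρ1 - ρ0) ^ 2 * (π' * (1 - π')) / (rhoB ρ0 ρ1 π' * (1 - rhoB ρ0 ρ1 π')) = 1 := by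
  unfold rhoB at *
  rw [div_add_div _ _ hB hB', ← add_div, div_eq_one_iff_eq (mul_ne_zero hB hB')]
  ring

/-- The three increments share the sign of `(p00 - p10) * (π - π')` and telescope to
`gam π - gam π'`, because `ρ * Γ1 + (1 - ρ) * Γ0 = γ`; so their absolute values add up exactly. -/
lemma belief_spread_eq (hρ0 : 0 < ρ0) (hρ01 : ρ0 < ρ1) (hρ1 : ρ1 < 1)
    (hπ : π ∈ Icc (0:ℝ) 1) (hπ' : π' ∈ Icc (0:ℝ) 1) :
    rhoB ρ0 ρ1 π * |Gam1 p00 p10 ρ0 ρ1 π - Gam1 p00 p10 ρ0 ρ1 π'|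
      + (1 - rhoB ρ0 ρ1 π) * |Gam0 p00 p10 ρ0 ρ1 π - Gam0 p00 p10 ρ0 ρ1 π'|
      + |rhoB ρ0 ρ1 π - rhoB ρ0 ρ1 π'| * |Gam1 p00 p10 ρ0 ρ1 π' - Gam0 p00 p10 ρ0 ρ1 π'|
      = |p00 - p10| * |π - π'| := by
  obtain ⟨hA0, hA1⟩ := rhoB_mem_Ioo hρ0 hρ01.le hρ1 hπ
  obtain ⟨hB0, hB1⟩ := rhoB_mem_Ioo hρ0 hρ01.le hρ1 hπ'
  have hB : rhoB ρ0 ρ1 π' ≠ 0 := hB0.ne'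
  have hB' : 1 - rhoB ρ0 ρ1 π' ≠ 0 := by linarith
  have hw1 : 0 ≤ ρ0 * ρ1 / rhoB ρ0 ρ1 π' := div_nonneg (by nlinarith) hB0.le
  have hw0 : 0 ≤ (1 - ρ0) * (1 - ρ1) / (1 - rhoB ρ0 ρ1 π') :=
    div_nonneg (by nlinarith) (by linarith)
  have hw10 : 0 ≤ (ρ1 - ρ0) ^ 2 * (π' * (1 - π')) / (rhoB ρ0 ρ1 π' * (1 - rhoB ρ0 ρ1 π')) :=
    div_nonneg (mul_nonneg (sq_nonneg _) (mul_nonneg hπ'.1 (sub_nonneg.2 hπ'.2)))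
      (mul_nonneg hB0.le (by linarith))
  calc _ = |rhoB ρ0 ρ1 π * (Gam1 p00 p10 ρ0 ρ1 π - Gam1 p00 p10 ρ0 ρ1 π')|
        + |(1 - rhoB ρ0 ρ1 π) * (Gam0 p00 p10 ρ0 ρ1 π - Gam0 p00 p10 ρ0 ρ1 π')|
        + |(rhoB ρ0 ρ1 π - rhoB ρ0 ρ1 π') * (Gam1 p00 p10 ρ0 ρ1 π' - Gam0 p00 p10 ρ0 ρ1 π')| := by
        rw [abs_mul, abs_mul, abs_mul, abs_of_pos hA0, abs_of_pos (sub_pos.2 hA1)]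
    _ = (ρ0 * ρ1 / rhoB ρ0 ρ1 π' + (1 - ρ0) * (1 - ρ1) / (1 - rhoB ρ0 ρ1 π')
        + (ρ1 - ρ0) ^ 2 * (π' * (1 - π')) / (rhoB ρ0 ρ1 π' * (1 - rhoB ρ0 ρ1 π')))
          * |(p00 - p10) * (π - π')| := by
        rw [rhoB_mul_Gam1_sub hA0.ne' hB, one_sub_rhoB_mul_Gam0_sub (by linarith) hB',
          rhoB_sub_mul_Gam1_sub_Gam0 hB hB']
        simp only [abs_mul, abs_of_nonneg hw1, abs_of_nonneg hw0, abs_of_nonneg hw10]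
        ring
    _ = |p00 - p10| * |π - π'| := by rw [belief_weights_sum hB hB', one_mul, abs_mul]

def availMix (θ : ℝ) (V : ℝ → Bool → ℝ) (x : ℝ) : ℝ := θ * V x true + (1 - θ) * V x false

def ApproxLipschitzOnIcc (V : ℝ → Bool → ℝ) (K E : ℝ) : Prop :=
  ∀ z ∈ Icc (0:ℝ) 1, ∀ z' ∈ Icc (0:ℝ) 1, ∀ y, |V z y - V z' y| ≤ K * |z - z'| + E

namespace ApproxLipschitzOnIcc

lemma slack_nonneg (hV : ApproxLipschitzOnIcc V K E) : 0 ≤ E := by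
  have h0 : (0:ℝ) ∈ Icc (0:ℝ) 1 := ⟨le_rfl, zero_le_one⟩
  simpa using hV 0 h0 0 h0 true

lemma mono (hV : ApproxLipschitzOnIcc V K E) {K' E' : ℝ} (hK : K ≤ K') (hE : E ≤ E') :
    ApproxLipschitzOnIcc V K' E' := fun z hz z' hz' y =>
  (hV z hz z' hz' y).trans
    (add_le_add (mul_le_mul_of_nonneg_right hK (abs_nonneg _)) hE)

lemma of_tendsto {Ks Es : ℕ → ℝ} {K E : ℝ} (hV : ∀ n, ApproxLipschitzOnIcc V (Ks n) (Es n))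
    (hK : Tendsto Ks atTop (𝓝 K)) (hE : Tendsto Es atTop (𝓝 E)) :
    ApproxLipschitzOnIcc V K E := fun z hz z' hz' y =>
  ge_of_tendsto' ((hK.mul_const _).add hE) fun n => hV n z hz z' hz' y

lemma of_abs_le {C : ℝ} (hC : ∀ π ∈ Icc (0:ℝ) 1, ∀ y, |V π y| ≤ C) :
    ApproxLipschitzOnIcc V 0 (2 * C) := fun z hz z' hz' y => by
  have := abs_sub (V z y) (V z' y)
  linarith [hC z hz y, hC z' hz' y]

lemma availMix_sub_le {θ x x' : ℝ} (hV : ApproxLipschitzOnIcc V K E) (hθ : θ ∈ Icc (0:ℝ) 1)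
    (hx : x ∈ Icc (0:ℝ) 1) (hx' : x' ∈ Icc (0:ℝ) 1) :
    |availMix θ V x - availMix θ V x'| ≤ K * |x - x'| + E := by
  obtain ⟨hθ0, hθ1⟩ := hθ
  calc |availMix θ V x - availMix θ V x'|
      = |θ * (V x true - V x' true) + (1 - θ) * (V x false - V x' false)| := by
        unfold availMix; ring_nf
    _ ≤ θ * |V x true - V x' true| + (1 - θ) * |V x false - V x' false| := by
        refine (abs_add_le _ _).trans_eq ?_
        rw [abs_mul, abs_mul, abs_of_nonneg hθ0, abs_of_nonneg (sub_nonneg.2 hθ1)]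
    _ ≤ θ * (K * |x - x'| + E) + (1 - θ) * (K * |x - x'| + E) := by
        have := sub_nonneg.2 hθ1
        gcongr
        exacts [hV x hx x' hx' true, hV x hx x' hx' false]
    _ = K * |x - x'| + E := by ring

end ApproxLipschitzOnIcc

lemma Lact0a_sub_le (hV : ApproxLipschitzOnIcc V K E) (hp00 : p00 ∈ Icc (0:ℝ) 1)
    (hp10 : p10 ∈ Icc (0:ℝ) 1) (hβ : 0 ≤ β) (hθ : θ ∈ Icc (0:ℝ) 1)
    (hπ : π ∈ Icc (0:ℝ) 1) (hπ' : π' ∈ Icc (0:ℝ) 1) :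
    |Lact0a p00 p10 β w θ V π - Lact0a p00 p10 β w θ V π'|
      ≤ β * (K * (|p00 - p10| * |π - π'|) + E) := by
  have hmix := hV.availMix_sub_le hθ (gam_mem_Icc hp00 hp10 hπ) (gam_mem_Icc hp00 hp10 hπ')
  rw [gam_sub, abs_mul] at hmix
  have hsplit : Lact0a p00 p10 β w θ V π - Lact0a p00 p10 β w θ V π'
      = β * (availMix θ V (gam p00 p10 π) - availMix θ V (gam p00 p10 π')) := by
    unfold Lact0a availMix; ring
  rw [hsplit, abs_mul, abs_of_nonneg hβ]
  exact mul_le_mul_of_nonneg_left hmix hβ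

lemma Lact1_sub_sub_rhoB_le (hV : ApproxLipschitzOnIcc V K E) (hp00 : p00 ∈ Icc (0:ℝ) 1)
    (hp10 : p10 ∈ Icc (0:ℝ) 1) (hρ0 : 0 < ρ0) (hρ01 : ρ0 < ρ1) (hρ1 : ρ1 < 1) (hβ : 0 ≤ β)
    (hθ : θ ∈ Icc (0:ℝ) 1) (hπ : π ∈ Icc (0:ℝ) 1) (hπ' : π' ∈ Icc (0:ℝ) 1) :
    |Lact1 p00 p10 ρ0 ρ1 β θ V π - Lact1 p00 p10 ρ0 ρ1 β θ V π'
        - (rhoB ρ0 ρ1 π - rhoB ρ0 ρ1 π')|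
      ≤ β * (K * (|p00 - p10| * |π - π'|) + E + (ρ1 - ρ0) * |π - π'| * E) := by
  set Γ1 := Gam1 p00 p10 ρ0 ρ1
  set Γ0 := Gam0 p00 p10 ρ0 ρ1
  set ρ := rhoB ρ0 ρ1
  obtain ⟨hρπ0, hρπ1⟩ := rhoB_mem_Ioo hρ0 hρ01.le hρ1 hπ
  have hρπ1' : 0 ≤ 1 - ρ π := sub_nonneg.2 hρπ1.le
  have hΓ1 := Gam1_mem_Icc hp00 hp10 hρ0 hρ01.le hπ
  have hΓ1' := Gam1_mem_Icc hp00 hp10 hρ0 hρ01.le hπ'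
  have hΓ0 := Gam0_mem_Icc hp00 hp10 hρ01.le hρ1 hπ
  have hΓ0' := Gam0_mem_Icc hp00 hp10 hρ01.le hρ1 hπ'
  have hsplit : Lact1 p00 p10 ρ0 ρ1 β θ V π - Lact1 p00 p10 ρ0 ρ1 β θ V π' - (ρ π - ρ π')
      = β * (ρ π * (availMix θ V (Γ1 π) - availMix θ V (Γ1 π'))
        + (1 - ρ π) * (availMix θ V (Γ0 π) - availMix θ V (Γ0 π'))
        + (ρ π - ρ π') * (availMix θ V (Γ1 π') - availMix θ V (Γ0 π'))) := by
    unfold Lact1 availMix; ring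
  rw [hsplit, abs_mul, abs_of_nonneg hβ]
  gcongr
  calc _ ≤ ρ π * |availMix θ V (Γ1 π) - availMix θ V (Γ1 π')|
        + (1 - ρ π) * |availMix θ V (Γ0 π) - availMix θ V (Γ0 π')|
        + |ρ π - ρ π'| * |availMix θ V (Γ1 π') - availMix θ V (Γ0 π')| := by
        refine (abs_add_three _ _ _).trans_eq ?_
        rw [abs_mul, abs_mul, abs_mul, abs_of_pos hρπ0, abs_of_nonneg hρπ1']
    _ ≤ ρ π * (K * |Γ1 π - Γ1 π'| + E) + (1 - ρ π) * (K * |Γ0 π - Γ0 π'| + E)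
        + |ρ π - ρ π'| * (K * |Γ1 π' - Γ0 π'| + E) := by
        have := hρπ0.le
        gcongr
        exacts [hV.availMix_sub_le hθ hΓ1 hΓ1', hV.availMix_sub_le hθ hΓ0 hΓ0',
          hV.availMix_sub_le hθ hΓ1' hΓ0']
    _ = K * (ρ π * |Γ1 π - Γ1 π'| + (1 - ρ π) * |Γ0 π - Γ0 π'| + |ρ π - ρ π'| * |Γ1 π' - Γ0 π'|)
        + E + |ρ π - ρ π'| * E := by ring
    _ = K * (|p00 - p10| * |π - π'|) + E + (ρ1 - ρ0) * |π - π'| * E := by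
        rw [belief_spread_eq hρ0 hρ01 hρ1 hπ hπ', rhoB_sub, abs_mul, abs_of_pos (sub_pos.2 hρ01),
          abs_sub_comm π']

lemma ApproxLipschitzOnIcc.improve {θ11 θ01 θ00 : ℝ} (hp00 : p00 ∈ Icc (0:ℝ) 1)
    (hp10 : p10 ∈ Icc (0:ℝ) 1) (hρ0 : 0 < ρ0) (hρ01 : ρ0 < ρ1) (hρ1 : ρ1 < 1) (hβ : 0 ≤ β)
    (hθ11 : θ11 ∈ Icc (0:ℝ) 1) (hθ01 : θ01 ∈ Icc (0:ℝ) 1) (hθ00 : θ00 ∈ Icc (0:ℝ) 1)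
    (hVfix : FixedOnIcc (TwOp p00 p10 ρ0 ρ1 β w θ11 θ01 θ00) V)
    (hV : ApproxLipschitzOnIcc V K E) :
    ApproxLipschitzOnIcc V ((ρ1 - ρ0) + β * |p00 - p10| * K + β * (ρ1 - ρ0) * E) (β * E) := by
  intro π hπ π' hπ' y
  have hE := hV.slack_nonneg
  have hpassive : ∀ θ ∈ Icc (0:ℝ) 1,
      |Lact0a p00 p10 β w θ V π - Lact0a p00 p10 β w θ V π'|
        ≤ ((ρ1 - ρ0) + β * |p00 - p10| * K + β * (ρ1 - ρ0) * E) * |π - π'| + β * E := by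
    intro θ hθ
    refine (Lact0a_sub_le hV hp00 hp10 hβ hθ hπ hπ').trans ?_
    have := mul_nonneg (sub_nonneg.2 hρ01.le) (abs_nonneg (π - π'))
    nlinarith [mul_nonneg (mul_nonneg hβ hE) this]
  have hactive : |Lact1 p00 p10 ρ0 ρ1 β θ11 V π - Lact1 p00 p10 ρ0 ρ1 β θ11 V π'|
      ≤ ((ρ1 - ρ0) + β * |p00 - p10| * K + β * (ρ1 - ρ0) * E) * |π - π'| + β * E := by
    have hrho : |rhoB ρ0 ρ1 π - rhoB ρ0 ρ1 π'| = (ρ1 - ρ0) * |π - π'| := by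
      rw [rhoB_sub, abs_mul, abs_of_pos (sub_pos.2 hρ01), abs_sub_comm]
    have := abs_sub_abs_le_abs_sub
      (Lact1 p00 p10 ρ0 ρ1 β θ11 V π - Lact1 p00 p10 ρ0 ρ1 β θ11 V π')
      (rhoB ρ0 ρ1 π - rhoB ρ0 ρ1 π')
    rw [hrho] at this
    linarith [Lact1_sub_sub_rhoB_le hV hp00 hp10 hρ0 hρ01 hρ1 hβ hθ11 hπ hπ']
  cases y
  · rw [← hVfix π hπ false, ← hVfix π' hπ' false]
    exact hpassive θ00 hθ00
  · rw [← hVfix π hπ true, ← hVfix π' hπ' true]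
    exact (abs_max_sub_max_le_max _ _ _ _).trans (max_le hactive (hpassive θ01 hθ01))

theorem approxLipschitzOnIcc_zero_of_fixedOnIcc {θ11 θ01 θ00 : ℝ} (hp00 : p00 ∈ Icc (0:ℝ) 1)
    (hp10 : p10 ∈ Icc (0:ℝ) 1) (hρ0 : 0 < ρ0) (hρ01 : ρ0 < ρ1) (hρ1 : ρ1 < 1)
    (hβ0 : 0 ≤ β) (hβ1 : β < 1) (hθ11 : θ11 ∈ Icc (0:ℝ) 1) (hθ01 : θ01 ∈ Icc (0:ℝ) 1)
    (hθ00 : θ00 ∈ Icc (0:ℝ) 1) (hδ : |p00 - p10| < 1) (hVb : BddOnIcc V)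
    (hVfix : FixedOnIcc (TwOp p00 p10 ρ0 ρ1 β w θ11 θ01 θ00) V) :
    ApproxLipschitzOnIcc V ((ρ1 - ρ0) / (1 - β * |p00 - p10|)) 0 := by
  obtain ⟨C, hC⟩ := hVb
  have hV0 := ApproxLipschitzOnIcc.of_abs_le hC
  have hC0 : 0 ≤ 2 * C := hV0.slack_nonneg
  have hβδ : β * |p00 - p10| < 1 := by nlinarith [abs_nonneg (p00 - p10)]
  set L := (ρ1 - ρ0) / (1 - β * |p00 - p10|)
  set D := 2 * C * (ρ1 - ρ0) / (1 - |p00 - p10|)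
  have hL : 0 ≤ L := div_nonneg (by linarith) (by linarith)
  have hD : 0 ≤ D := div_nonneg (mul_nonneg hC0 (by linarith)) (by linarith)
  -- `D` makes `(L + D * β ^ n, 2 * C * β ^ n)` an orbit of the one-step improvement map.
  have hiter : ∀ n : ℕ, ApproxLipschitzOnIcc V (L + D * β ^ n) (2 * C * β ^ n) := by
    intro n
    induction n with
    | zero => simpa using hV0.mono (add_nonneg hL hD) le_rfl
    | succ n ih =>
      refine (ih.improve hp00 hp10 hρ0 hρ01 hρ1 hβ0 hθ11 hθ01 hθ00 hVfix).mono
        (le_of_eq ?_) (le_of_eq (by ring))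
      have h1 : 1 - β * |p00 - p10| ≠ 0 := by linarith
      have h2 : 1 - |p00 - p10| ≠ 0 := by linarith
      simp only [L, D]
      field_simp
      ring
  have hpow := tendsto_pow_atTop_nhds_zero_of_lt_one hβ0 hβ1
  simpa using ApproxLipschitzOnIcc.of_tendsto hiter
    (tendsto_const_nhds.add (hpow.const_mul D)) (hpow.const_mul (2 * C))

theorem advantage_strictAntiOn {θ11 θ01 : ℝ} (hV : ApproxLipschitzOnIcc V K 0)
    (hK : 2 * β * |p00 - p10| * K < ρ1 - ρ0) (hp00 : p00 ∈ Icc (0:ℝ) 1)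
    (hp10 : p10 ∈ Icc (0:ℝ) 1) (hρ0 : 0 < ρ0) (hρ01 : ρ0 < ρ1) (hρ1 : ρ1 < 1) (hβ : 0 ≤ β)
    (hθ11 : θ11 ∈ Icc (0:ℝ) 1) (hθ01 : θ01 ∈ Icc (0:ℝ) 1) :
    StrictAntiOn (fun π => Lact1 p00 p10 ρ0 ρ1 β θ11 V π - Lact0a p00 p10 β w θ01 V π)
      (Icc 0 1) := by
  intro x hx x' hx' hlt
  have hΔ : 0 < x' - x := sub_pos.2 hlt
  have hactive := (abs_le.mp (Lact1_sub_sub_rhoB_le hV hp00 hp10 hρ0 hρ01 hρ1 hβ hθ11 hx' hx)).2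
  have hpassive := (abs_le.mp (Lact0a_sub_le (w := w) hV hp00 hp10 hβ hθ01 hx' hx)).1
  rw [rhoB_sub, abs_of_pos hΔ] at hactive
  rw [abs_of_pos hΔ] at hpassive
  nlinarith [mul_lt_mul_of_pos_right hK hΔ]

end AvailabilityBandit

open AvailabilityBandit

/-- **At most one root of the advantage function.** If
`ρ1 > ρ0` and either `0 < p00 − p10 < 1/5` or `0 < p10 − p00 < 1/3`, then the
advantage function `D(π) = L1 V_w(π,1) − L0 V_w(π,1)` has at most one root in
`(0,1)`. -/
theorem stmt10 (p00 p10 ρ0 ρ1 β w θ11 θ01 θ00 : ℝ)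
    (hp00 : p00 ∈ Icc (0:ℝ) 1) (hp10 : p10 ∈ Icc (0:ℝ) 1)
    (hρ0 : 0 < ρ0) (hρ01 : ρ0 < ρ1) (hρ1 : ρ1 < 1)
    (hβ : β ∈ Ioo (0:ℝ) 1)
    (hθ11 : θ11 ∈ Icc (0:ℝ) 1) (hθ01 : θ01 ∈ Icc (0:ℝ) 1) (hθ00 : θ00 ∈ Icc (0:ℝ) 1)
    (hp : (0 < p00 - p10 ∧ p00 - p10 < 1/5) ∨ (0 < p10 - p00 ∧ p10 - p00 < 1/3))
    (V : ℝ → Bool → ℝ) (hVb : BddOnIcc V)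
    (hVfix : FixedOnIcc (TwOp p00 p10 ρ0 ρ1 β w θ11 θ01 θ00) V) :
    ∀ π ∈ Ioo (0:ℝ) 1, ∀ π' ∈ Ioo (0:ℝ) 1,
      Lact1 p00 p10 ρ0 ρ1 β θ11 V π - Lact0a p00 p10 β w θ01 V π = 0 →
      Lact1 p00 p10 ρ0 ρ1 β θ11 V π' - Lact0a p00 p10 β w θ01 V π' = 0 →
      π = π' := by
  have hδ : |p00 - p10| < 1 / 3 := by
    rw [abs_lt]; rcases hp with ⟨_, _⟩ | ⟨_, _⟩ <;> constructor <;> linarith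
  have hβδ : 3 * (β * |p00 - p10|) < 1 := by nlinarith [abs_nonneg (p00 - p10), hβ.1, hβ.2]
  have hV := approxLipschitzOnIcc_zero_of_fixedOnIcc hp00 hp10 hρ0 hρ01 hρ1 hβ.1.le hβ.2
    hθ11 hθ01 hθ00 (by linarith) hVb hVfix
  have hK : 2 * β * |p00 - p10| * ((ρ1 - ρ0) / (1 - β * |p00 - p10|)) < ρ1 - ρ0 := by
    rw [← mul_div_assoc, div_lt_iff₀ (by linarith)]
    nlinarith
  intro π hπ π' hπ' hD hD'
  exact (advantage_strictAntiOn hV hK hp00 hp10 hρ0 hρ01 hρ1 hβ.1.le hθ11 hθ01).injOn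
    (Ioo_subset_Icc_self hπ) (Ioo_subset_Icc_self hπ') (hD.trans hD'.symm)
end
end
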